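/- Single-period AIPW double robustness: define ψ(π,η) = 1{A=a}(Y − η(Z))/π(Z) + η(Z). If either π(Z) = P(A=a|Z) almost surely, or η(Z) = E[Y|A=a,Z] almost surely, then E[ψ(π,η)] = E[E[Y|A=a,Z]], provided π is bounded away from 0 and η, Y are integrable. -/

import Mathlib

open MeasureTheory Filter

/-- Indicator (as a real-valued function) of the event `A = a`. -/
noncomputable def ind {Ω : Type*} (A : Ω → Bool) (a : Bool) : Ω → ℝ :=
  fun ω => if A ω = a then 1 else 0

/-!
Conditioning on `Z`, which determines `π` and `η`, replaces `1{A=a} (Y - η)` by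
`E[1{A=a} Y | Z] - η P(A=a | Z) = πs (ηs - η)`, so `E[ψ(π,η)] = E[η + πs (ηs - η) / π]`.
The integrand is `ηs` as soon as `π = πs` or `η = ηs`.
-/

section

variable {Ω : Type*}

theorem norm_ind_le_one (A : Ω → Bool) (a : Bool) (ω : Ω) : ‖ind A a ω‖ ≤ 1 := by
  unfold ind
  split_ifs <;> simp

variable [MeasurableSpace Ω] {μ : Measure Ω} {A : Ω → Bool}

theorem measurable_ind (hA : Measurable A) (a : Bool) : Measurable (ind A a) :=
  Measurable.ite (hA (measurableSet_singleton a)) measurable_const measurable_const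

theorem MeasureTheory.Integrable.ind_mul (hA : Measurable A) (a : Bool) {f : Ω → ℝ}
    (hf : Integrable f μ) :
    Integrable (fun ω => ind A a ω * f ω) μ :=
  hf.bdd_mul (measurable_ind hA a).aestronglyMeasurable (ae_of_all _ (norm_ind_le_one A a))

theorem integrable_ind [IsFiniteMeasure μ] (hA : Measurable A) (a : Bool) :
    Integrable (ind A a) μ := by
  simpa using (integrable_const (1 : ℝ)).ind_mul (μ := μ) hA a

theorem MeasureTheory.Integrable.div_of_le {f π : Ω → ℝ} {ε : ℝ} (hf : Integrable f μ)
    (hπ : Measurable π) (hε : 0 < ε) (hπε : ∀ ω, ε ≤ π ω) : Integrable (fun ω => f ω / π ω) μ := by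
  have hbound : ∀ ω, ‖(π ω)⁻¹‖ ≤ ε⁻¹ := fun ω => by
    rw [norm_inv, Real.norm_of_nonneg (hε.trans_le (hπε ω)).le]
    exact inv_anti₀ hε (hπε ω)
  simpa only [div_eq_inv_mul] using
    hf.bdd_mul (f := fun ω => (π ω)⁻¹) hπ.inv.aestronglyMeasurable (ae_of_all _ hbound)

end

section

variable {Ω : Type*} {m m₀ : MeasurableSpace Ω} {μ : Measure[m₀] Ω}

theorem integral_mul_condExp_of_stronglyMeasurable [IsFiniteMeasure μ] (hm : m ≤ m₀)
    {f g : Ω → ℝ} (hf : StronglyMeasurable[m] f) (hfg : Integrable (fun ω => f ω * g ω) μ)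
    (hg : Integrable g μ) :
    ∫ ω, f ω * (μ[g | m]) ω ∂μ = ∫ ω, f ω * g ω ∂μ :=
  (integral_congr_ae (condExp_mul_of_stronglyMeasurable_left hf hfg hg).symm).trans
    (integral_condExp hm)

theorem condExp_mul_sub_of_stronglyMeasurable {I Y η : Ω → ℝ} (hη : StronglyMeasurable[m] η)
    (hI : Integrable I μ) (hIY : Integrable (fun ω => I ω * Y ω) μ)
    (hηI : Integrable (fun ω => η ω * I ω) μ) :
    μ[fun ω => I ω * (Y ω - η ω) | m]
      =ᵐ[μ] fun ω => (μ[fun ω => I ω * Y ω | m]) ω - η ω * (μ[I | m]) ω := by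
  have hsplit : (fun ω => I ω * (Y ω - η ω)) = (fun ω => I ω * Y ω) - fun ω => η ω * I ω := by
    ext ω
    simp only [Pi.sub_apply]
    ring
  rw [hsplit]
  filter_upwards [condExp_sub hIY hηI m, condExp_mul_of_stronglyMeasurable_left hη hηI hI]
    with ω hsub hmul
  rw [hsub, Pi.sub_apply]
  exact congrArg _ hmul

end

theorem integral_aipw_eq {Ω : Type*} {m m₀ : MeasurableSpace Ω} {μ : Measure[m₀] Ω}
    [IsFiniteMeasure μ] (hm : m ≤ m₀) {A : Ω → Bool} {a : Bool} {Y π η πs ηs : Ω → ℝ} {ε : ℝ}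
    (hA : Measurable A) (hY : Integrable Y μ) (hε : 0 < ε)
    (hπ : Measurable[m] π) (hπε : ∀ ω, ε ≤ π ω) (hη : Measurable[m] η) (hηint : Integrable η μ)
    (hπs : πs =ᵐ[μ] μ[ind A a | m])
    (hηs : (fun ω => πs ω * ηs ω) =ᵐ[μ] μ[fun ω => ind A a ω * Y ω | m]) :
    ∫ ω, (ind A a ω * (Y ω - η ω) / π ω + η ω) ∂μ
      = ∫ ω, (πs ω * (ηs ω - η ω) / π ω + η ω) ∂μ := by
  set g : Ω → ℝ := fun ω => ind A a ω * (Y ω - η ω)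
  have hg : Integrable g μ := (hY.sub hηint).ind_mul hA a
  have hπ₀ : Measurable π := hπ.mono hm le_rfl
  have hgce : μ[g | m] =ᵐ[μ] fun ω => πs ω * (ηs ω - η ω) := by
    filter_upwards [condExp_mul_sub_of_stronglyMeasurable hη.stronglyMeasurable
      (integrable_ind hA a) (hY.ind_mul hA a) (by simpa only [mul_comm] using hηint.ind_mul hA a),
      hπs, hηs] with ω hce hπsω hηsω
    rw [hce, ← hπsω, ← hηsω]
    ring
  have hpullout : ∫ ω, g ω / π ω ∂μ = ∫ ω, (μ[g | m]) ω / π ω ∂μ := by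
    simp only [div_eq_inv_mul]
    exact (integral_mul_condExp_of_stronglyMeasurable hm
      (f := fun ω => (π ω)⁻¹) hπ.inv.stronglyMeasurable
      (by simpa only [div_eq_inv_mul] using hg.div_of_le hπ₀ hε hπε) hg).symm
  calc ∫ ω, (ind A a ω * (Y ω - η ω) / π ω + η ω) ∂μ
      = ∫ ω, g ω / π ω ∂μ + ∫ ω, η ω ∂μ := integral_add (hg.div_of_le hπ₀ hε hπε) hηint
    _ = ∫ ω, ((μ[g | m]) ω / π ω + η ω) ∂μ := by
      rw [hpullout, ← integral_add (Integrable.div_of_le integrable_condExp hπ₀ hε hπε) hηint]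
    _ = ∫ ω, (πs ω * (ηs ω - η ω) / π ω + η ω) ∂μ := by
      refine integral_congr_ae ?_
      filter_upwards [hgce] with ω hω
      rw [hω]

theorem aipw_double_robustness_general
    {Ω 𝒵 : Type*} [MeasurableSpace Ω] [MeasurableSpace 𝒵]
    (μ : Measure Ω) [IsProbabilityMeasure μ]
    (Z : Ω → 𝒵) (A : Ω → Bool) (Y : Ω → ℝ) (a : Bool)
    (hZ : Measurable Z) (hA : Measurable A) (hY : Integrable Y μ)
    -- working nuisance models:
    (π η : Ω → ℝ) (ε : ℝ) (hε : 0 < ε)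
    (hπmeas : Measurable[MeasurableSpace.comap Z inferInstance] π)
    (hπbd : ∀ ω, π ω ∈ Set.Icc ε 1)
    (hηmeas : Measurable[MeasurableSpace.comap Z inferInstance] η)
    (hηint : Integrable η μ)
    -- true nuisance functions: πs = P(A=a|Z) > 0 a.s., ηs = E[Y|A=a,Z]:
    (πs ηs : Ω → ℝ)
    (hπs : πs =ᵐ[μ] μ[ind A a | MeasurableSpace.comap Z inferInstance])
    (hηs : (fun ω => πs ω * ηs ω) =ᵐ[μ]
      μ[fun ω => ind A a ω * Y ω | MeasurableSpace.comap Z inferInstance])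
    -- double robustness hypothesis:
    (hcorrect : π =ᵐ[μ] πs ∨ η =ᵐ[μ] ηs) :
    ∫ ω, (ind A a ω * (Y ω - η ω) / π ω + η ω) ∂μ = ∫ ω, ηs ω ∂μ := by
  rw [integral_aipw_eq hZ.comap_le hA hY hε hπmeas (fun ω => (hπbd ω).1) hηmeas hηint hπs hηs]
  refine integral_congr_ae ?_
  rcases hcorrect with hπ | hη
  · filter_upwards [hπ] with ω hω
    have hπ₀ : π ω ≠ 0 := (hε.trans_le (hπbd ω).1).ne'
    rw [← hω, mul_div_cancel_left₀ _ hπ₀, sub_add_cancel]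
  · filter_upwards [hη] with ω hω
    simp [hω]

/-- Single-period AIPW double robustness: with
`ψ(π,η) = 1{A=a}(Y − η(Z))/π(Z) + η(Z)`, if either `π(Z) = P(A=a|Z)` a.s. or
`η(Z) = E[Y|A=a,Z]` a.s., then `E[ψ(π,η)] = E[E[Y|A=a,Z]]`, provided `π` is
bounded away from `0` and `η`, `Y` are integrable. -/
theorem aipw_double_robustness
    {Ω 𝒵 : Type*} [MeasurableSpace Ω] [MeasurableSpace 𝒵]
    (μ : Measure Ω) [IsProbabilityMeasure μ]
    (Z : Ω → 𝒵) (A : Ω → Bool) (Y : Ω → ℝ) (a : Bool)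
    (hZ : Measurable Z) (hA : Measurable A) (hY : Integrable Y μ)
    -- working nuisance models:
    (π η : Ω → ℝ) (ε : ℝ) (hε : 0 < ε)
    (hπmeas : Measurable[MeasurableSpace.comap Z inferInstance] π)
    (hπbd : ∀ ω, π ω ∈ Set.Icc ε 1)
    (hηmeas : Measurable[MeasurableSpace.comap Z inferInstance] η)
    (hηint : Integrable η μ)
    -- true nuisance functions: πs = P(A=a|Z) > 0 a.s., ηs = E[Y|A=a,Z]:
    (πs ηs : Ω → ℝ)
    (hπs : πs =ᵐ[μ] μ[ind A a | MeasurableSpace.comap Z inferInstance])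
    (hπspos : ∀ᵐ ω ∂μ, 0 < πs ω)
    (hηsmeas : Measurable[MeasurableSpace.comap Z inferInstance] ηs)
    (hηs : (fun ω => πs ω * ηs ω) =ᵐ[μ]
      μ[fun ω => ind A a ω * Y ω | MeasurableSpace.comap Z inferInstance])
    (hηsint : Integrable ηs μ)
    -- double robustness hypothesis:
    (hcorrect : π =ᵐ[μ] πs ∨ η =ᵐ[μ] ηs) :
    ∫ ω, (ind A a ω * (Y ω - η ω) / π ω + η ω) ∂μ = ∫ ω, ηs ω ∂μ :=
  aipw_double_robustness_general μ Z A Y a hZ hA hY π η ε hε hπmeas hπbd hηmeas hηint πs ηs hπs hηs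
    hcorrect
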